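/- arXiv:2508.08427 — 2 statements merged into one kernel-verified Lean document; each statement's English description precedes it below -/
import Mathlib

section
/- Suppose A > A₀. Then the grand canonical Hamiltonian H_{ℝ²} has φ = 0 as its unique minimizer over H¹(ℝ²): inf{ H_{ℝ²}(φ) : φ ∈ H¹(ℝ²) } = 0, H_{ℝ²}(0) = 0, and H_{ℝ²}(φ) > 0 for every φ ∈ H¹(ℝ²) with φ ≠ 0. -/
/-!
The dilation `φ ↦ c² φ(c ·)` is L²-critical on ℝ²: it multiplies `∫ φ²` by `c²` and both terms
of `H₀` by `c⁴`. Normalising the mass `m = ∫ φ²` to one therefore gives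
`H₀(φ) ≥ -A₀ m²`, so `H_{ℝ²}(φ) ≥ (A - A₀) m² > 0` as soon as `φ ≠ 0`.
-/

noncomputable section

open MeasureTheory

/-- The plane ℝ². -/
abbrev R2 : Type := EuclideanSpace ℝ (Fin 2)

/-- Squared L²(ℝ²) norm. -/
def L2sq (φ : R2 → ℝ) : ℝ := ∫ x : R2, (φ x) ^ 2

/-- L²(ℝ²) norm. -/
def L2norm (φ : R2 → ℝ) : ℝ := Real.sqrt (L2sq φ)

/-- Squared L²(ℝ²) norm of the gradient. -/
def gradL2sq (φ : R2 → ℝ) : ℝ := ∫ x : R2, ‖fderiv ℝ φ x‖ ^ 2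

/-- L²(ℝ²) norm of the gradient. -/
def gradL2norm (φ : R2 → ℝ) : ℝ := Real.sqrt (gradL2sq φ)

/-- Cubed L³(ℝ²) norm, i.e. ∫ |φ|³. -/
def L3cube (φ : R2 → ℝ) : ℝ := ∫ x : R2, |φ x| ^ 3

/-- Membership in H¹(ℝ²): φ and its gradient are square integrable (together with the
L³ integrability, which holds for every H¹(ℝ²) function by Sobolev embedding). -/
structure InH1 (φ : R2 → ℝ) : Prop where
  diff : Differentiable ℝ φ
  memL2 : MemLp φ 2 volume
  gradMemL2 : MemLp (fun x => ‖fderiv ℝ φ x‖) 2 volume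
  memL3 : MemLp φ 3 volume

/-- The Weinstein functional 𝓕(φ) = ‖∇φ‖_{L²}‖φ‖_{L²}²/‖φ‖_{L³}³. -/
def weinstein (φ : R2 → ℝ) : ℝ := gradL2norm φ * (L2norm φ) ^ 2 / L3cube φ

/-- The Laplacian on ℝ². -/
def lap (φ : R2 → ℝ) (x : R2) : ℝ :=
  ∑ i : Fin 2, fderiv ℝ (fun y => fderiv ℝ φ y (EuclideanSpace.single i 1)) x
    (EuclideanSpace.single i 1)

/-- φ vanishes almost everywhere (i.e. φ = 0 as an element of H¹). -/
def aeZero (φ : R2 → ℝ) : Prop := φ =ᵐ[volume] fun _ => 0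

/-- `Q` is a (nonzero) minimizer of the Weinstein functional over nonzero H¹(ℝ²) functions
that solves the elliptic equation ΔQ + 2Q² − 2Q = 0. -/
structure IsGNSOptimizer (Q : R2 → ℝ) : Prop where
  h1 : InH1 Q
  ne : ¬ aeZero Q
  isMin : ∀ φ : R2 → ℝ, InH1 φ → ¬ aeZero φ → weinstein Q ≤ weinstein φ
  ell : ∀ x, lap Q x + 2 * (Q x) ^ 2 - 2 * Q x = 0

/-- The Hamiltonian H₀(φ) = (1/2)∫|∇φ|² + (σ/3)∫φ³ on ℝ². -/
def H0f (σ : ℝ) (φ : R2 → ℝ) : ℝ :=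
  (1/2) * gradL2sq φ + (σ/3) * ∫ x : R2, (φ x) ^ 3

/-- The grand canonical Hamiltonian H_{ℝ²}(φ) = H₀(φ) + A(∫φ²)². -/
def HR2 (σ A : ℝ) (φ : R2 → ℝ) : ℝ :=
  H0f σ φ + A * (∫ x : R2, (φ x) ^ 2) ^ 2

/-- The set of values of H₀ on the unit L² sphere of H¹(ℝ²). -/
def sphereVals (σ : ℝ) : Set ℝ :=
  {y | ∃ φ : R2 → ℝ, InH1 φ ∧ L2norm φ = 1 ∧ y = H0f σ φ}

/-- The critical chemical potential A₀ = −inf{H₀(φ) : φ ∈ H¹(ℝ²), ‖φ‖_{L²} = 1}. -/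
def A0 (σ : ℝ) : ℝ := - sInf (sphereVals σ)

/-- The rescaled soliton Q_{q,x₀}(x) = q·Q(q^{1/2}(x − x₀)). -/
def solQ (Q : R2 → ℝ) (q : ℝ) (x₀ : R2) : R2 → ℝ :=
  fun x => q * Q (Real.sqrt q • (x - x₀))

section Dilation

variable {E : Type*} [NormedAddCommGroup E] [NormedSpace ℝ E]

lemma fderiv_const_mul_comp_smul {φ : E → ℝ} (a c : ℝ) {x : E}
    (h : DifferentiableAt ℝ φ (c • x)) :
    fderiv ℝ (fun y => a * φ (c • y)) x = (a * c) • fderiv ℝ φ (c • x) := by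
  have hcomp : HasFDerivAt (fun y => φ (c • y))
      ((fderiv ℝ φ (c • x)).comp (c • ContinuousLinearMap.id ℝ E)) x :=
    h.hasFDerivAt.comp x (c • ContinuousLinearMap.id ℝ E).hasFDerivAt
  rw [(hcomp.const_mul a).fderiv]
  ext v
  simp [mul_assoc]

variable [MeasurableSpace E] [BorelSpace E] [FiniteDimensional ℝ E]
  {μ : Measure E} [μ.IsAddHaarMeasure]

lemma MeasureTheory.MemLp.comp_smul {F : Type*} [NormedAddCommGroup F] {f : E → F} {p : ENNReal}
    (hf : MemLp f p μ) {c : ℝ} (hc : c ≠ 0) : MemLp (fun x => f (c • x)) p μ := by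
  have hmap : MemLp f p (μ.map (c • ·)) := by
    rw [Measure.map_addHaar_smul μ hc]
    exact hf.smul_measure ENNReal.ofReal_ne_top
  exact (memLp_map_measure_iff hmap.aestronglyMeasurable
    (measurable_const_smul c).aemeasurable).mp hmap

end Dilation

def critDilate (c : ℝ) (φ : R2 → ℝ) : R2 → ℝ := fun x => c ^ 2 * φ (c • x)

section CriticalDilation

variable {φ : R2 → ℝ} {c : ℝ}

lemma integral_critDilate_pow (n : ℕ) (hc : c ≠ 0) :
    ∫ x, critDilate c φ x ^ n = c ^ (2 * n) / c ^ 2 * ∫ x, φ x ^ n := by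
  simp_rw [critDilate, mul_pow, ← pow_mul]
  rw [integral_const_mul, Measure.integral_comp_smul volume (fun y => φ y ^ n),
    finrank_euclideanSpace_fin, smul_eq_mul, abs_of_pos (by positivity)]
  ring

lemma L2sq_critDilate (hc : c ≠ 0) : L2sq (critDilate c φ) = c ^ 2 * L2sq φ := by
  rw [L2sq, integral_critDilate_pow 2 hc, L2sq]
  field_simp

lemma gradL2sq_critDilate (h : Differentiable ℝ φ) (hc : c ≠ 0) :
    gradL2sq (critDilate c φ) = c ^ 4 * gradL2sq φ := by
  have hnorm (x : R2) : ‖fderiv ℝ (critDilate c φ) x‖ ^ 2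
      = (c ^ 3) ^ 2 * ‖fderiv ℝ φ (c • x)‖ ^ 2 := by
    unfold critDilate
    rw [fderiv_const_mul_comp_smul _ _ (h _), norm_smul, Real.norm_eq_abs,
      mul_pow, sq_abs]
    ring
  simp_rw [gradL2sq, hnorm]
  rw [integral_const_mul, Measure.integral_comp_smul volume (fun y => ‖fderiv ℝ φ y‖ ^ 2),
    finrank_euclideanSpace_fin, smul_eq_mul, abs_of_pos (by positivity)]
  field_simp

lemma H0f_critDilate (σ : ℝ) (h : Differentiable ℝ φ) (hc : c ≠ 0) :
    H0f σ (critDilate c φ) = c ^ 4 * H0f σ φ := by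
  rw [H0f, H0f, gradL2sq_critDilate h hc, integral_critDilate_pow 3 hc]
  field_simp
  ring

lemma InH1.critDilate (h : InH1 φ) (hc : c ≠ 0) : InH1 (critDilate c φ) := by
  refine ⟨(h.diff.comp (differentiable_id.const_smul c)).const_mul _,
    (h.memL2.comp_smul hc).const_mul _, ?_, (h.memL3.comp_smul hc).const_mul _⟩
  have hnorm : (fun x => ‖fderiv ℝ (_root_.critDilate c φ) x‖)
      = fun x => |c ^ 2 * c| * ‖fderiv ℝ φ (c • x)‖ := by
    funext x
    unfold _root_.critDilate
    rw [fderiv_const_mul_comp_smul _ _ (h.diff _), norm_smul, Real.norm_eq_abs]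
  rw [hnorm]
  exact (h.gradMemL2.comp_smul hc).const_mul _

lemma neg_A0_mul_L2sq_sq_le_H0f {σ : ℝ} (hbdd : BddBelow (sphereVals σ)) (h : InH1 φ)
    (hm : 0 < L2sq φ) : -A0 σ * L2sq φ ^ 2 ≤ H0f σ φ := by
  set m := L2sq φ
  set c := (Real.sqrt m)⁻¹
  have hc : c ≠ 0 := inv_ne_zero (Real.sqrt_pos.mpr hm).ne'
  have hc2 : c ^ 2 = m⁻¹ := by rw [inv_pow, Real.sq_sqrt hm.le]
  have hunit : L2norm (critDilate c φ) = 1 := by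
    rw [L2norm, L2sq_critDilate hc, hc2, inv_mul_cancel₀ hm.ne', Real.sqrt_one]
  have hinf : -A0 σ ≤ c ^ 4 * H0f σ φ := by
    rw [A0, neg_neg, ← H0f_critDilate σ h.diff hc]
    exact csInf_le hbdd ⟨_, h.critDilate hc, hunit, rfl⟩
  have hc4 : c ^ 4 * m ^ 2 = 1 := by
    rw [show c ^ 4 = (c ^ 2) ^ 2 by ring, hc2, ← mul_pow, inv_mul_cancel₀ hm.ne', one_pow]
  calc -A0 σ * m ^ 2 ≤ c ^ 4 * H0f σ φ * m ^ 2 := by gcongr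
    _ = H0f σ φ := by rw [mul_right_comm, hc4, one_mul]

lemma L2sq_pos (hφ : MemLp φ 2 volume) (hz : ¬ aeZero φ) : 0 < L2sq φ := by
  refine (integral_nonneg fun x => sq_nonneg (φ x)).lt_of_ne fun h0 => hz ?_
  filter_upwards [(integral_eq_zero_iff_of_nonneg (fun x => sq_nonneg (φ x))
    hφ.integrable_sq).mp h0.symm] with x hx
  exact pow_eq_zero_iff two_ne_zero |>.mp hx

lemma InH1.eq_zero_of_aeZero (h : InH1 φ) (hz : aeZero φ) : φ = fun _ => 0 :=
  (h.diff.continuous.ae_eq_iff_eq volume continuous_const).mp hz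

lemma inH1_zero : InH1 fun _ : R2 => (0 : ℝ) :=
  ⟨differentiable_const 0, MemLp.zero', by simp [MemLp.zero'], MemLp.zero'⟩

lemma HR2_zero (σ A : ℝ) : HR2 σ A (fun _ => 0) = 0 := by
  simp [HR2, H0f, gradL2sq]

lemma HR2_pos {σ A : ℝ} (hbdd : BddBelow (sphereVals σ)) (hA : A0 σ < A) (h : InH1 φ)
    (hz : ¬ aeZero φ) : 0 < HR2 σ A φ := by
  have hm := L2sq_pos h.memL2 hz
  calc 0 < (A - A0 σ) * L2sq φ ^ 2 := by have := sub_pos.mpr hA; positivity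
    _ = -A0 σ * L2sq φ ^ 2 + A * L2sq φ ^ 2 := by ring
    _ ≤ HR2 σ A φ := add_le_add_left (neg_A0_mul_L2sq_sq_le_H0f hbdd h hm) _

end CriticalDilation

theorem statement_8_general (σ A : ℝ) (hbdd : BddBelow (sphereVals σ)) (hA : A0 σ < A) :
    sInf {y | ∃ φ : R2 → ℝ, InH1 φ ∧ y = HR2 σ A φ} = 0 ∧
    HR2 σ A (fun _ => 0) = 0 ∧
    (∀ φ : R2 → ℝ, InH1 φ → ¬ aeZero φ → 0 < HR2 σ A φ) := by
  have hleast : IsLeast {y | ∃ φ : R2 → ℝ, InH1 φ ∧ y = HR2 σ A φ} 0 := by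
    refine ⟨⟨_, inH1_zero, (HR2_zero σ A).symm⟩, ?_⟩
    rintro _ ⟨φ, hφ, rfl⟩
    by_cases hz : aeZero φ
    · rw [hφ.eq_zero_of_aeZero hz, HR2_zero]
    · exact (HR2_pos hbdd hA hφ hz).le
  exact ⟨hleast.csInf_eq, HR2_zero σ A, fun φ => HR2_pos hbdd hA⟩

/-- Supercritical taming A > A₀: the grand canonical Hamiltonian H_{ℝ²} has φ = 0 as its
unique minimizer over H¹(ℝ²): the infimum is 0, it is attained at 0, and H_{ℝ²}(φ) > 0
for every φ ∈ H¹(ℝ²) with φ ≠ 0 (as an element of H¹, i.e. not a.e. zero). -/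
theorem statement_8 (σ A : ℝ) (hσ : σ ≠ 0)
    (hne : (sphereVals σ).Nonempty) (hbdd : BddBelow (sphereVals σ)) (hpos : 0 < A0 σ)
    (hA : A0 σ < A) :
    sInf {y | ∃ φ : R2 → ℝ, InH1 φ ∧ y = HR2 σ A φ} = 0 ∧
    HR2 σ A (fun _ => 0) = 0 ∧
    (∀ φ : R2 → ℝ, InH1 φ → ¬ aeZero φ → 0 < HR2 σ A φ) :=
  statement_8_general σ A hbdd hA
end
end

section
/- Suppose A = A₀ and let Q ∈ H¹(ℝ²) satisfy ‖Q‖_{L²(ℝ²)} = 1 and H₀(Q) = inf{ H₀(φ) : φ ∈ H¹(ℝ²), ‖φ‖_{L²(ℝ²)} = 1 }. Then inf{ H_{ℝ²}(φ) : φ ∈ H¹(ℝ²) } = 0, and for every q > 0 and every x₀ ∈ ℝ², the rescaled soliton Q_{q,x₀}(x) = q·Q(q^{1/2}(x − x₀)) is a minimizer: H_{ℝ²}(Q_{q,x₀}) = 0. In particular H_{ℝ²} admits infinitely many minimizers. -/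
noncomputable section

open MeasureTheory

/-
Under `φ ↦ q φ(√q (· − x₀))` the mass `∫ φ²` scales like `q` and `H₀` like `q²`, so `H_{ℝ²}`
scales like `q²`. Rescaling a nonzero `φ` to unit mass therefore gives
`H₀(φ) ≥ −A₀ (∫ φ²)²`, i.e. `H_{ℝ²} ≥ 0` when `A = A₀`. The minimizer `Q` has unit mass and
`H₀(Q) = −A₀`, so `H_{ℝ²}(Q) = 0`, and the same holds for all its rescalings, which are
pairwise distinct since their masses `q` are.
-/

open MeasureTheory Set

section Scaling

variable {E F : Type*} [NormedAddCommGroup E] [NormedSpace ℝ E] [NormedAddCommGroup F]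

theorem integral_comp_smul_sub [MeasurableSpace E] [BorelSpace E] [FiniteDimensional ℝ E]
    [NormedSpace ℝ F] (μ : Measure E) [μ.IsAddHaarMeasure]
    (f : E → F) (c : ℝ) (x₀ : E) :
    ∫ x, f (c • (x - x₀)) ∂μ = |(c ^ Module.finrank ℝ E)⁻¹| • ∫ x, f x ∂μ := by
  rw [integral_sub_right_eq_self (fun y => f (c • y)) x₀, Measure.integral_comp_smul]

theorem MeasureTheory.MemLp.comp_smul_sub [MeasurableSpace E] [BorelSpace E]
    [FiniteDimensional ℝ E] {p : ENNReal} {μ : Measure E} [μ.IsAddHaarMeasure] {g : E → F}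
    (hg : MemLp g p μ) {c : ℝ} (hc : c ≠ 0) (x₀ : E) : MemLp (fun x => g (c • (x - x₀))) p μ := by
  have hT : Measurable fun x : E => c • (x - x₀) :=
    (measurable_id.sub_const x₀).const_smul c
  have hmap : μ.map (fun x : E => c • (x - x₀))
      = ENNReal.ofReal |(c ^ Module.finrank ℝ E)⁻¹| • μ := by
    change μ.map ((c • ·) ∘ (· - x₀)) = _
    rw [← Measure.map_map (measurable_const_smul c) (measurable_sub_const x₀),
      (measurePreserving_sub_right μ x₀).map_eq, Measure.map_addHaar_smul μ hc]
  have hg' : MemLp g p (μ.map fun x : E => c • (x - x₀)) := by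
    rw [hmap]; exact hg.smul_measure ENNReal.ofReal_ne_top
  exact (memLp_map_measure_iff hg'.aestronglyMeasurable hT.aemeasurable).1 hg'

theorem fderiv_const_mul_comp_smul_sub {φ : E → ℝ} (q c : ℝ) (x₀ x : E)
    (hφ : DifferentiableAt ℝ φ (c • (x - x₀))) :
    fderiv ℝ (fun x => q * φ (c • (x - x₀))) x = (q * c) • fderiv ℝ φ (c • (x - x₀)) := by
  have hT : HasFDerivAt (fun x : E => c • (x - x₀)) (c • ContinuousLinearMap.id ℝ E) x :=
    ((hasFDerivAt_id x).sub_const x₀).const_smul c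
  refine ((hφ.hasFDerivAt.comp x hT).const_mul q).fderiv.trans ?_
  ext v
  simp [mul_assoc]

end Scaling

theorem eq_zero_of_integral_sq_eq_zero {φ : R2 → ℝ} (hφ : InH1 φ)
    (h : ∫ x, φ x ^ 2 = 0) : φ = 0 := by
  have hsq : (fun x => φ x ^ 2) =ᵐ[volume] 0 :=
    (integral_eq_zero_iff_of_nonneg (fun x => sq_nonneg _) hφ.memL2.integrable_sq).1 h
  have hae : φ =ᵐ[volume] 0 := hsq.mono fun x hx => pow_eq_zero_iff two_ne_zero |>.1 hx
  exact (Continuous.ae_eq_iff_eq volume hφ.diff.continuous continuous_const).1 hae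

section solQ

variable {φ : R2 → ℝ} {q : ℝ}

theorem norm_fderiv_solQ (hφ : Differentiable ℝ φ) (hq : 0 < q) (x₀ x : R2) :
    ‖fderiv ℝ (solQ φ q x₀) x‖ = q * √q * ‖fderiv ℝ φ (√q • (x - x₀))‖ := by
  have h : fderiv ℝ (solQ φ q x₀) x = (q * √q) • fderiv ℝ φ (√q • (x - x₀)) :=
    fderiv_const_mul_comp_smul_sub q √q x₀ x (hφ _)
  rw [h, norm_smul, Real.norm_eq_abs, abs_of_pos (by positivity)]

theorem solQ_inH1 (hφ : InH1 φ) (hq : 0 < q) (x₀ : R2) : InH1 (solQ φ q x₀) := by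
  have hc : √q ≠ 0 := (Real.sqrt_pos.2 hq).ne'
  refine ⟨?_, (hφ.memL2.comp_smul_sub hc x₀).const_mul q, ?_,
    (hφ.memL3.comp_smul_sub hc x₀).const_mul q⟩
  · exact (hφ.diff.comp ((differentiable_id.sub_const x₀).const_smul √q)).const_mul q
  · simp_rw [norm_fderiv_solQ hφ.diff hq x₀]
    exact (hφ.gradMemL2.comp_smul_sub hc x₀).const_mul (q * √q)

theorem integral_comp_sqrt_smul_sub (f : R2 → ℝ) (hq : 0 < q) (x₀ : R2) :
    ∫ x, f (√q • (x - x₀)) = q⁻¹ * ∫ x, f x := by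
  rw [integral_comp_smul_sub, finrank_euclideanSpace_fin, Real.sq_sqrt hq.le,
    abs_of_pos (inv_pos.2 hq), smul_eq_mul]

theorem integral_solQ_pow (hq : 0 < q) (x₀ : R2) (n : ℕ) :
    ∫ x, solQ φ q x₀ x ^ n = q ^ n * q⁻¹ * ∫ x, φ x ^ n := by
  simp_rw [solQ, mul_pow, integral_const_mul]
  rw [integral_comp_sqrt_smul_sub (fun y => φ y ^ n) hq x₀, mul_assoc]

theorem integral_solQ_sq (hq : 0 < q) (x₀ : R2) :
    ∫ x, solQ φ q x₀ x ^ 2 = q * ∫ x, φ x ^ 2 := by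
  rw [integral_solQ_pow hq x₀ 2]
  field_simp

theorem gradL2sq_solQ (hφ : Differentiable ℝ φ) (hq : 0 < q) (x₀ : R2) :
    gradL2sq (solQ φ q x₀) = q ^ 2 * gradL2sq φ := by
  simp_rw [gradL2sq, norm_fderiv_solQ hφ hq x₀, mul_pow, integral_const_mul]
  rw [integral_comp_sqrt_smul_sub (fun y => ‖fderiv ℝ φ y‖ ^ 2) hq x₀, Real.sq_sqrt hq.le]
  field_simp

theorem H0f_solQ (σ : ℝ) (hφ : Differentiable ℝ φ) (hq : 0 < q) (x₀ : R2) :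
    H0f σ (solQ φ q x₀) = q ^ 2 * H0f σ φ := by
  rw [H0f, H0f, gradL2sq_solQ hφ hq x₀, integral_solQ_pow hq x₀ 3]
  field_simp

theorem HR2_solQ (σ A : ℝ) (hφ : Differentiable ℝ φ) (hq : 0 < q) (x₀ : R2) :
    HR2 σ A (solQ φ q x₀) = q ^ 2 * HR2 σ A φ := by
  rw [HR2, HR2, H0f_solQ σ hφ hq x₀, integral_solQ_sq hq x₀]
  ring

theorem injOn_solQ (hφ : ∫ x, φ x ^ 2 ≠ 0) (x₀ : R2) :
    InjOn (fun q => solQ φ q x₀) (Ioi 0) := by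
  intro a ha b hb hab
  have hmass := congrArg (fun ψ : R2 → ℝ => ∫ x, ψ x ^ 2) hab
  simp only [integral_solQ_sq ha, integral_solQ_sq hb] at hmass
  exact mul_right_cancel₀ hφ hmass

end solQ

theorem sInf_sphereVals_mul_le_H0f {σ : ℝ} (hbdd : BddBelow (sphereVals σ)) {φ : R2 → ℝ}
    (hφ : InH1 φ) : sInf (sphereVals σ) * (∫ x, φ x ^ 2) ^ 2 ≤ H0f σ φ := by
  rcases (integral_nonneg fun x => sq_nonneg (φ x) : 0 ≤ ∫ x, φ x ^ 2).eq_or_lt with hm | hm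
  · rw [← hm, eq_zero_of_integral_sq_eq_zero hφ hm.symm]
    simp [H0f, gradL2sq]
  set m := ∫ x, φ x ^ 2
  have hq : 0 < m⁻¹ := inv_pos.2 hm
  have hunit : L2norm (solQ φ m⁻¹ 0) = 1 := by
    rw [L2norm, L2sq, integral_solQ_sq hq, inv_mul_cancel₀ hm.ne', Real.sqrt_one]
  have hle := csInf_le hbdd ⟨_, solQ_inH1 hφ hq 0, hunit, rfl⟩
  rw [H0f_solQ σ hφ.diff hq 0] at hle
  calc sInf (sphereVals σ) * m ^ 2 ≤ m⁻¹ ^ 2 * H0f σ φ * m ^ 2 := by gcongr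
    _ = H0f σ φ := by field_simp

theorem HR2_A0_nonneg {σ : ℝ} (hbdd : BddBelow (sphereVals σ)) {φ : R2 → ℝ} (hφ : InH1 φ) :
    0 ≤ HR2 σ (A0 σ) φ := by
  have := sInf_sphereVals_mul_le_H0f hbdd hφ
  rw [HR2, A0]
  linarith

theorem statement_10_general (σ A : ℝ)
    (hbdd : BddBelow (sphereVals σ))
    (hA : A = A0 σ)
    (Q : R2 → ℝ) (hQ1 : InH1 Q) (hQnorm : L2norm Q = 1)
    (hQmin : H0f σ Q = sInf (sphereVals σ)) :
    sInf {y | ∃ φ : R2 → ℝ, InH1 φ ∧ y = HR2 σ A φ} = 0 ∧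
    (∀ q : ℝ, 0 < q → ∀ x₀ : R2, HR2 σ A (solQ Q q x₀) = 0) ∧
    {φ : R2 → ℝ | InH1 φ ∧ HR2 σ A φ = 0}.Infinite := by
  subst hA
  have hmass : ∫ x, Q x ^ 2 = 1 := Real.sqrt_eq_one.1 hQnorm
  have hQ0 : HR2 σ (A0 σ) Q = 0 := by
    rw [HR2, hmass, hQmin, A0]
    ring
  have hsol : ∀ q : ℝ, 0 < q → ∀ x₀ : R2, HR2 σ (A0 σ) (solQ Q q x₀) = 0 := by
    intro q hq x₀
    rw [HR2_solQ σ _ hQ1.diff hq x₀, hQ0, mul_zero]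
  refine ⟨IsLeast.csInf_eq ⟨⟨Q, hQ1, hQ0.symm⟩, ?_⟩, hsol, ?_⟩
  · rintro _ ⟨φ, hφ, rfl⟩
    exact HR2_A0_nonneg hbdd hφ
  · refine ((Ioi_infinite 0).image (injOn_solQ (hmass ▸ one_ne_zero) 0)).mono ?_
    rintro _ ⟨q, hq, rfl⟩
    exact ⟨solQ_inH1 hQ1 hq 0, hsol q hq 0⟩

/-- Critical taming A = A₀: the infimum of H_{ℝ²} over H¹(ℝ²) is 0, every rescaled
soliton Q_{q,x₀}(x) = q·Q(q^{1/2}(x − x₀)) with q > 0, x₀ ∈ ℝ² is a minimizer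
(H_{ℝ²}(Q_{q,x₀}) = 0), and in particular H_{ℝ²} has infinitely many minimizers. -/
theorem statement_10 (σ A : ℝ) (hσ : σ ≠ 0)
    (hne : (sphereVals σ).Nonempty) (hbdd : BddBelow (sphereVals σ)) (hpos : 0 < A0 σ)
    (hA : A = A0 σ)
    (Q : R2 → ℝ) (hQ1 : InH1 Q) (hQnorm : L2norm Q = 1)
    (hQmin : H0f σ Q = sInf (sphereVals σ)) :
    sInf {y | ∃ φ : R2 → ℝ, InH1 φ ∧ y = HR2 σ A φ} = 0 ∧
    (∀ q : ℝ, 0 < q → ∀ x₀ : R2, HR2 σ A (solQ Q q x₀) = 0) ∧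
    {φ : R2 → ℝ | InH1 φ ∧ HR2 σ A φ = 0}.Infinite :=
  statement_10_general σ A hbdd hA Q hQ1 hQnorm hQmin
end
end
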